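/- Let (X,d,μ) be a doubling metric measure space with doubling constant C_μ and n := log₂ C_μ. Let δ ∈ (0,1) and N ∈ ℕ with N > 2n. Then there exists a constant C ∈ (0,∞) such that for every x_B ∈ X, every r_B ∈ (0,∞), every i ∈ ℕ, and every x ∈ X with d(x, x_B) ≤ 2^i r_B, one has ∫₀^{2^{iδ} r_B} (t/(2^i r_B))^N (μ(B(x,t)))^{-1} dt/t ≤ C · 2^{−i(N−2n)(1−δ)} · (μ(B(x_B, 2^i r_B)))^{-1}. -/
import Mathlib

open MeasureTheory
open scoped ENNReal

lemma lint_rpow_aux {T a : ℝ} (hT : 0 < T) (ha : 0 < a) :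
    ∫⁻ t in Set.Ioo (0:ℝ) T, ENNReal.ofReal (t ^ (a-1)) = ENNReal.ofReal (T ^ a / a) := by
  rw [← MeasureTheory.ofReal_integral_eq_lintegral_ofReal]
  · rw [← MeasureTheory.integral_Ioc_eq_integral_Ioo, ← intervalIntegral.integral_of_le hT.le,
      integral_rpow (Or.inl (by linarith))]
    rw [Real.zero_rpow (by linarith : a - 1 + 1 ≠ 0)]
    norm_num
  · exact (intervalIntegral.integrableOn_Ioo_rpow_iff hT).2 (by linarith)
  · filter_upwards [ae_restrict_mem measurableSet_Ioo] with t ht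
    exact Real.rpow_nonneg ht.1.le _

lemma doub_iter {X : Type*} [MetricSpace X] [MeasurableSpace X]
    (μ : Measure X) (Cμ : ℝ)
    (hμdoub : ∀ (x : X) (r : ℝ), 0 < r →
      μ (Metric.ball x (2 * r)) ≤ ENNReal.ofReal Cμ * μ (Metric.ball x r))
    (x : X) (s : ℝ) (hs : 0 < s) :
    ∀ k : ℕ, μ (Metric.ball x (2 ^ k * s)) ≤ (ENNReal.ofReal Cμ) ^ k * μ (Metric.ball x s) := by
  intro k
  induction k with
  | zero => simp
  | succ k ih =>
    have h2 : (2:ℝ) ^ (k+1) * s = 2 * (2 ^ k * s) := by ring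
    rw [h2]
    calc μ (Metric.ball x (2 * (2 ^ k * s)))
        ≤ ENNReal.ofReal Cμ * μ (Metric.ball x (2 ^ k * s)) :=
          hμdoub x _ (by positivity)
      _ ≤ ENNReal.ofReal Cμ * ((ENNReal.ofReal Cμ) ^ k * μ (Metric.ball x s)) :=
          mul_le_mul_right ih _
      _ = (ENNReal.ofReal Cμ) ^ (k+1) * μ (Metric.ball x s) := by ring

/-- In a doubling metric measure space with doubling constant `Cμ` and
`n := logb 2 Cμ`, for `δ ∈ (0,1)` and `N ∈ ℕ` with `N > 2n`, there is `C > 0` such that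
for all `x_B ∈ X`, `r_B > 0`, `i ∈ ℕ` and `x` with `d(x,x_B) ≤ 2^i r_B`,
`∫₀^{2^{iδ} r_B} (t/(2^i r_B))^N μ(B(x,t))⁻¹ dt/t
  ≤ C 2^{-i(N-2n)(1-δ)} μ(B(x_B, 2^i r_B))⁻¹`. -/
theorem stmt_8 {X : Type*} [MetricSpace X] [MeasurableSpace X]
    (μ : Measure X) (Cμ : ℝ) (hCμ : 1 ≤ Cμ)
    (hμpos : ∀ (x : X) (r : ℝ), 0 < r → 0 < μ (Metric.ball x r))
    (hμfin : ∀ (x : X) (r : ℝ), 0 < r → μ (Metric.ball x r) < ⊤)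
    (hμdoub : ∀ (x : X) (r : ℝ), 0 < r →
      μ (Metric.ball x (2 * r)) ≤ ENNReal.ofReal Cμ * μ (Metric.ball x r))
    (δ : ℝ) (hδ : δ ∈ Set.Ioo (0 : ℝ) 1) (N : ℕ) (hN : 2 * Real.logb 2 Cμ < N) :
    ∃ C : ℝ, 0 < C ∧
      ∀ (xB : X) (rB : ℝ), 0 < rB → ∀ (i : ℕ) (x : X), dist x xB ≤ 2 ^ i * rB →
        (∫⁻ t in Set.Ioo (0 : ℝ) ((2 : ℝ) ^ ((i : ℝ) * δ) * rB),
            ENNReal.ofReal ((t / (2 ^ i * rB)) ^ N) * (μ (Metric.ball x t))⁻¹ /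
              ENNReal.ofReal t)
          ≤ ENNReal.ofReal
              (C * (2 : ℝ) ^ (-(i : ℝ) * ((N : ℝ) - 2 * Real.logb 2 Cμ) * (1 - δ))) *
            (μ (Metric.ball xB (2 ^ i * rB)))⁻¹ := by
  set n := Real.logb 2 Cμ with hn_def
  have hCμ0 : (0:ℝ) < Cμ := lt_of_lt_of_le one_pos hCμ
  have hn0 : 0 ≤ n := Real.logb_nonneg one_lt_two hCμ
  have hCμeq : (2:ℝ) ^ n = Cμ := Real.rpow_logb two_pos (by norm_num) hCμ0
  set a : ℝ := (N : ℝ) - n with ha_def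
  have ha : 0 < a := sub_pos.mpr (by linarith)
  refine ⟨4 ^ n / a, by positivity, ?_⟩
  intro xB rB hrB i x hx
  set R : ℝ := 2 ^ i * rB with hR_def
  set T : ℝ := (2:ℝ) ^ ((i:ℝ) * δ) * rB with hT_def
  have hR : 0 < R := by positivity
  have hT : 0 < T := by positivity
  have hTR : T ≤ R := by
    have h2 : (2:ℝ) ^ ((i:ℝ) * δ) ≤ 2 ^ (i:ℝ) := by
      apply Real.rpow_le_rpow_of_exponent_le one_le_two
      nlinarith [hδ.2, (Nat.cast_nonneg i : (0:ℝ) ≤ i)]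
    have he : (2:ℝ) ^ (i:ℝ) = 2 ^ i := by rw [Real.rpow_natCast]
    rw [hT_def, hR_def, ← he]
    exact mul_le_mul_of_nonneg_right h2 hrB.le
  have hμB0 : 0 < μ (Metric.ball xB R) := hμpos xB R hR
  have hμBfin : μ (Metric.ball xB R) < ⊤ := hμfin xB R hR
  have hK0 : (0:ℝ) ≤ 4 ^ n * R ^ (-a) := by positivity
  -- pointwise bound
  have key : ∀ t ∈ Set.Ioo (0:ℝ) T,
      ENNReal.ofReal ((t / R) ^ N) * (μ (Metric.ball x t))⁻¹ / ENNReal.ofReal t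
        ≤ ENNReal.ofReal (4 ^ n * R ^ (-a) * t ^ (a - 1)) * (μ (Metric.ball xB R))⁻¹ := by
    intro t ht
    obtain ⟨ht0, htT⟩ := ht
    have htR : t ≤ R := le_trans htT.le hTR
    -- measure comparison
    have hinv : (μ (Metric.ball x t))⁻¹
        ≤ ENNReal.ofReal ((4 * R / t) ^ n) * (μ (Metric.ball xB R))⁻¹ := by
      set k : ℕ := ⌈Real.logb 2 (2 * R / t)⌉₊ with hk_def
      have hq : (2:ℝ) ≤ 2 * R / t := by
        rw [le_div_iff₀ ht0]; linarith
      have hq0 : (0:ℝ) < 2 * R / t := lt_of_lt_of_le two_pos hq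
      have hlogb1 : (1:ℝ) ≤ Real.logb 2 (2 * R / t) := by
        calc (1:ℝ) = Real.logb 2 2 := by simp
        _ ≤ Real.logb 2 (2 * R / t) := Real.logb_le_logb_of_le one_lt_two two_pos hq
      have hk_ge : 2 * R ≤ 2 ^ k * t := by
        have h1 : Real.logb 2 (2 * R / t) ≤ (k : ℝ) := Nat.le_ceil _
        have h2 : 2 * R / t ≤ 2 ^ (k:ℝ) := by
          calc 2 * R / t = 2 ^ Real.logb 2 (2 * R / t) :=
              (Real.rpow_logb two_pos (by norm_num) hq0).symm
            _ ≤ 2 ^ (k:ℝ) := Real.rpow_le_rpow_of_exponent_le one_le_two h1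
        rw [div_le_iff₀ ht0] at h2
        calc 2 * R ≤ 2 ^ (k:ℝ) * t := h2
          _ = 2 ^ k * t := by rw [Real.rpow_natCast]
      have hsub : Metric.ball xB R ⊆ Metric.ball x (2 ^ k * t) := by
        intro y hy
        rw [Metric.mem_ball] at hy ⊢
        have hxx : dist xB x ≤ R := by rw [dist_comm]; exact hx
        calc dist y x ≤ dist y xB + dist xB x := dist_triangle y xB x
          _ < R + R := by linarith
          _ ≤ 2 ^ k * t := by linarith
      have hmeas : μ (Metric.ball xB R) ≤ ENNReal.ofReal (Cμ ^ k) * μ (Metric.ball x t) := by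
        calc μ (Metric.ball xB R) ≤ μ (Metric.ball x (2 ^ k * t)) := measure_mono hsub
          _ ≤ (ENNReal.ofReal Cμ) ^ k * μ (Metric.ball x t) := doub_iter μ Cμ hμdoub x t ht0 k
          _ = ENNReal.ofReal (Cμ ^ k) * μ (Metric.ball x t) := by
              rw [ENNReal.ofReal_pow hCμ0.le]
      have hCk : Cμ ^ k ≤ (4 * R / t) ^ n := by
        have hkb : (k:ℝ) ≤ Real.logb 2 (2 * R / t) + 1 :=
          (Nat.ceil_lt_add_one (by linarith)).le
        calc Cμ ^ k = ((2:ℝ) ^ n) ^ k := by rw [hCμeq]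
          _ = (2:ℝ) ^ (n * k) := by
              rw [← Real.rpow_natCast ((2:ℝ)^n) k, ← Real.rpow_mul two_pos.le]
          _ ≤ (2:ℝ) ^ (n * (Real.logb 2 (2 * R / t) + 1)) := by
              apply Real.rpow_le_rpow_of_exponent_le one_le_two
              exact mul_le_mul_of_nonneg_left hkb hn0
          _ = ((2:ℝ) ^ (Real.logb 2 (2 * R / t) + 1)) ^ n := by
              rw [← Real.rpow_mul two_pos.le]; ring_nf
          _ = (4 * R / t) ^ n := by
              congr 1
              rw [Real.rpow_add two_pos, Real.rpow_logb two_pos (by norm_num) hq0,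
                Real.rpow_one]
              ring
      have hc0 : ENNReal.ofReal (Cμ ^ k) ≠ 0 :=
        ne_of_gt (ENNReal.ofReal_pos.mpr (by positivity))
      have hcfin : ENNReal.ofReal (Cμ ^ k) ≠ ⊤ := ENNReal.ofReal_ne_top
      have step : (ENNReal.ofReal (Cμ ^ k))⁻¹ * μ (Metric.ball xB R) ≤ μ (Metric.ball x t) := by
        calc (ENNReal.ofReal (Cμ ^ k))⁻¹ * μ (Metric.ball xB R)
            ≤ (ENNReal.ofReal (Cμ ^ k))⁻¹ * (ENNReal.ofReal (Cμ ^ k) * μ (Metric.ball x t)) :=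
              mul_le_mul_right hmeas _
          _ = μ (Metric.ball x t) := by
              rw [← mul_assoc, ENNReal.inv_mul_cancel hc0 hcfin, one_mul]
      calc (μ (Metric.ball x t))⁻¹
          ≤ ((ENNReal.ofReal (Cμ ^ k))⁻¹ * μ (Metric.ball xB R))⁻¹ :=
            ENNReal.inv_le_inv.mpr step
        _ = ENNReal.ofReal (Cμ ^ k) * (μ (Metric.ball xB R))⁻¹ := by
            rw [ENNReal.mul_inv (Or.inl (ENNReal.inv_ne_zero.mpr hcfin))
              (Or.inl (ENNReal.inv_ne_top.mpr hc0)), inv_inv]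
        _ ≤ ENNReal.ofReal ((4 * R / t) ^ n) * (μ (Metric.ball xB R))⁻¹ :=
            mul_le_mul_left (ENNReal.ofReal_le_ofReal hCk) _
    -- real identity
    have hreal : (t / R) ^ N * (4 * R / t) ^ n / t = 4 ^ n * R ^ (-a) * t ^ (a - 1) := by
      have hN' : ((t:ℝ)/R)^N = t ^ (N:ℝ) / R ^ (N:ℝ) := by
        rw [div_pow, ← Real.rpow_natCast t, ← Real.rpow_natCast R]
      have h4 : (4*R/t) ^ n = 4^n * R^n / t^n := by
        rw [Real.div_rpow (by positivity) ht0.le, Real.mul_rpow (by norm_num) hR.le]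
      have hRa : R ^ (-a) = R ^ n / R ^ (N:ℝ) := by
        rw [ha_def, neg_sub, Real.rpow_sub hR]
      have hta : t ^ (a-1) = t ^ (N:ℝ) / (t ^ n * t) := by
        rw [ha_def, show (N:ℝ) - n - 1 = (N:ℝ) - (n + 1) by ring, Real.rpow_sub ht0,
          Real.rpow_add ht0, Real.rpow_one]
      rw [hN', h4, hRa, hta]
      have h1 : R ^ (N:ℝ) ≠ 0 := by positivity
      have h2 : (t:ℝ) ^ n ≠ 0 := by positivity
      field_simp
    calc ENNReal.ofReal ((t / R) ^ N) * (μ (Metric.ball x t))⁻¹ / ENNReal.ofReal t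
        ≤ ENNReal.ofReal ((t / R) ^ N) *
            (ENNReal.ofReal ((4 * R / t) ^ n) * (μ (Metric.ball xB R))⁻¹) / ENNReal.ofReal t := by
          gcongr
      _ = ENNReal.ofReal ((t / R) ^ N * (4 * R / t) ^ n / t) * (μ (Metric.ball xB R))⁻¹ := by
          rw [ENNReal.ofReal_div_of_pos ht0, ENNReal.ofReal_mul (by positivity)]
          simp only [div_eq_mul_inv]
          ring
      _ = ENNReal.ofReal (4 ^ n * R ^ (-a) * t ^ (a - 1)) * (μ (Metric.ball xB R))⁻¹ := by
          rw [hreal]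
  -- integrate the bound
  have hBinv_ne_top : (μ (Metric.ball xB R))⁻¹ ≠ ⊤ := ENNReal.inv_ne_top.mpr hμB0.ne'
  have hint : (∫⁻ t in Set.Ioo (0:ℝ) T,
        ENNReal.ofReal (4 ^ n * R ^ (-a) * t ^ (a - 1)) * (μ (Metric.ball xB R))⁻¹)
      = ENNReal.ofReal (4 ^ n * R ^ (-a) * (T ^ a / a)) * (μ (Metric.ball xB R))⁻¹ := by
    rw [lintegral_mul_const' _ _ hBinv_ne_top]
    congr 1
    have : ∀ t : ℝ, ENNReal.ofReal (4 ^ n * R ^ (-a) * t ^ (a - 1))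
        = ENNReal.ofReal (4 ^ n * R ^ (-a)) * ENNReal.ofReal (t ^ (a - 1)) := fun t => by
      rw [ENNReal.ofReal_mul hK0]
    simp_rw [this]
    rw [lintegral_const_mul' _ _ ENNReal.ofReal_ne_top, lint_rpow_aux hT ha,
      ← ENNReal.ofReal_mul hK0]
  -- final real comparison
  have hfinal : 4 ^ n * R ^ (-a) * (T ^ a / a)
      ≤ 4 ^ n / a * (2:ℝ) ^ (-(i:ℝ) * ((N:ℝ) - 2 * n) * (1 - δ)) := by
    have hTRpow : T / R = (2:ℝ) ^ ((i:ℝ) * δ - (i:ℝ)) := by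
      rw [hT_def, hR_def, show ((2:ℝ) ^ i) = (2:ℝ) ^ (i:ℝ) from (Real.rpow_natCast 2 i).symm,
        mul_div_mul_right _ _ hrB.ne', ← Real.rpow_sub two_pos]
    have h5 : R ^ (-a) * T ^ a = (2:ℝ) ^ (((i:ℝ) * δ - (i:ℝ)) * a) := by
      rw [Real.rpow_mul two_pos.le, ← hTRpow, Real.div_rpow hT.le hR.le,
        Real.rpow_neg hR.le, div_eq_mul_inv]
      ring
    have heq : 4 ^ n * R ^ (-a) * (T ^ a / a)
        = 4 ^ n / a * (2:ℝ) ^ (((i:ℝ) * δ - (i:ℝ)) * a) := by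
      rw [← h5]; ring
    rw [heq]
    apply mul_le_mul_of_nonneg_left _ (by positivity)
    apply Real.rpow_le_rpow_of_exponent_le one_le_two
    have hiδn : (0:ℝ) ≤ (i:ℝ) * (1 - δ) * n :=
      mul_nonneg (mul_nonneg (Nat.cast_nonneg i) (by linarith [hδ.2])) hn0
    simp only [ha_def]
    nlinarith
  calc (∫⁻ t in Set.Ioo (0 : ℝ) T,
        ENNReal.ofReal ((t / R) ^ N) * (μ (Metric.ball x t))⁻¹ / ENNReal.ofReal t)
      ≤ ∫⁻ t in Set.Ioo (0:ℝ) T,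
          ENNReal.ofReal (4 ^ n * R ^ (-a) * t ^ (a - 1)) * (μ (Metric.ball xB R))⁻¹ :=
        setLIntegral_mono' measurableSet_Ioo key
    _ = ENNReal.ofReal (4 ^ n * R ^ (-a) * (T ^ a / a)) * (μ (Metric.ball xB R))⁻¹ := hint
    _ ≤ ENNReal.ofReal (4 ^ n / a * (2:ℝ) ^ (-(i:ℝ) * ((N:ℝ) - 2 * n) * (1 - δ))) *
          (μ (Metric.ball xB R))⁻¹ :=
        mul_le_mul_left (ENNReal.ofReal_le_ofReal hfinal) _
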